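/- Let s ∈ ℂ be such that ∑_{n≥2} n^{−Re(s)} < 1. Then the family (N(c)^{−s}) indexed by compositions c all of whose parts are ≥ 2 is summable, 2 − ζ(s) ≠ 0, and ∑_{c∈C_{ℕ*}} N(c)^{−s} = 1/(2 − ζ(s)), where ζ is the Riemann zeta function. -/

import Mathlib

/-!
A composition with all parts `≥ 2` is a word over the alphabet `{2, 3, …}`, and `N(c)^{-s}`
is multiplicative in the letters. Summing over the words of length `k` therefore gives `T ^ k`
with `T = ∑_{n ≥ 2} n^{-s} = ζ(s) - 1`, and the hypothesis `∑_{n ≥ 2} n^{-Re s} < 1` makes the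
whole family absolutely summable, so its sum is the geometric series `∑ₖ T ^ k = 1 / (2 - ζ(s))`.
-/

open Finset

section TupleProducts

variable {ι R : Type*} [NormedCommRing R] {f : ι → R}

theorem summable_norm_prod_fin (hf : Summable (‖f ·‖)) (n : ℕ) :
    Summable fun x : Fin n → ι => ‖∏ i, f (x i)‖ := by
  induction n with
  | zero => exact .of_finite
  | succ n ih =>
    rw [← (Fin.consEquiv fun _ => ι).summable_iff]
    simpa [Function.comp_def, Fin.prod_univ_succ] using hf.mul_norm ih

theorem hasSum_prod_fin [CompleteSpace R] (hf : Summable (‖f ·‖)) (n : ℕ) :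
    HasSum (fun x : Fin n → ι => ∏ i, f (x i)) ((∑' i, f i) ^ n) := by
  induction n with
  | zero => simp
  | succ n ih =>
    rw [← (Fin.consEquiv fun _ => ι).hasSum_iff, pow_succ']
    have hprod : Summable fun p : ι × (Fin n → ι) => f p.1 * ∏ i, f (p.2 i) :=
      summable_mul_of_summable_norm (f := f) (g := fun x : Fin n → ι => ∏ i, f (x i)) hf
        (summable_norm_prod_fin hf n)
    simpa [Function.comp_def, Fin.prod_univ_succ] using (Summable.of_norm hf).hasSum.mul ih hprod

end TupleProducts

theorem hasSum_list_prod_map {ι 𝕜 : Type*} [NormedField 𝕜] [CompleteSpace 𝕜] {f : ι → 𝕜}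
    (hf : Summable (‖f ·‖)) (h : ∑' i, ‖f i‖ < 1) :
    HasSum (fun l : List ι => (l.map f).prod) (1 - ∑' i, f i)⁻¹ := by
  rw [← List.equivSigmaTuple.symm.hasSum_iff]
  have hnorm : Summable fun p : Σ n, Fin n → ι => ‖∏ i, f (p.2 i)‖ := by
    refine (summable_sigma_of_nonneg fun _ => norm_nonneg _).2
      ⟨summable_norm_prod_fin hf, ?_⟩
    have hf' : Summable fun i => ‖‖f i‖‖ := by simpa only [norm_norm] using hf
    have hfiber (n : ℕ) : ∑' x : Fin n → ι, ‖∏ i, f (x i)‖ = (∑' i, ‖f i‖) ^ n := by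
      rw [← (hasSum_prod_fin (f := fun i => ‖f i‖) hf' n).tsum_eq]
      simp only [norm_prod]
    simp only [hfiber]
    exact summable_geometric_of_lt_one (tsum_nonneg fun _ => norm_nonneg _) h
  have hT : ‖∑' i, f i‖ < 1 := (norm_tsum_le_tsum_norm hf).trans_lt h
  have hsigma := HasSum.sigma_of_hasSum (f := fun p : Σ n, Fin n → ι => ∏ i, f (p.2 i))
    (hasSum_geometric_of_norm_lt_one hT) (hasSum_prod_fin hf) hnorm.of_norm
  convert hsigma using 2 with p
  simp [List.map_ofFn, List.prod_ofFn]

def Equiv.listSubtypeComm {α : Type*} (p : α → Prop) :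
    List {a // p a} ≃ {l : List α // ∀ a ∈ l, p a} where
  toFun l := ⟨l.unattach, fun _ ha => (List.mem_unattach.1 ha).1⟩
  invFun l := l.1.attachWith p l.2
  left_inv l := by induction l <;> simp_all
  right_inv l := by simp

theorem Complex.list_prod_map_natCast_cpow (l : List ℕ) (s : ℂ) :
    (l.map fun n : ℕ => (n : ℂ) ^ s).prod = ((l.prod : ℕ) : ℂ) ^ s := by
  induction l with
  | nil => simp
  | cons n l ih => rw [List.map_cons, List.prod_cons, ih, List.prod_cons, Nat.cast_mul,
      Complex.natCast_mul_natCast_cpow]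

section NatSubtype

variable {M : Type*} [AddCommGroup M] [TopologicalSpace M] [IsTopologicalAddGroup M] {f : ℕ → M}

theorem hasSum_subtype_nat_le_iff (k : ℕ) {a : M} :
    HasSum (fun n : {n : ℕ // k ≤ n} => f n) a ↔ HasSum f (a + ∑ i ∈ range k, f i) := by
  rw [← (range k).hasSum_compl_iff]
  exact (Equiv.subtypeEquivRight (p := fun n : ℕ => n ∉ range k) (q := (k ≤ ·))
    fun n => by simp).hasSum_iff.symm

theorem summable_subtype_nat_le_iff (k : ℕ) :
    Summable (fun n : {n : ℕ // k ≤ n} => f n) ↔ Summable f := by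
  refine ⟨fun ⟨a, ha⟩ => ((hasSum_subtype_nat_le_iff k).1 ha).summable, fun hf => ?_⟩
  refine ⟨∑' n, f n - ∑ i ∈ range k, f i, (hasSum_subtype_nat_le_iff k).2 ?_⟩
  rw [sub_add_cancel]
  exact hf.hasSum

end NatSubtype

theorem riemannZeta_eq_one_add_tsum {s : ℂ} (hs : 1 < s.re) :
    riemannZeta s = 1 + ∑' n : {n : ℕ // 2 ≤ n}, ((n : ℕ) : ℂ) ^ (-s) := by
  let f (n : ℕ) : ℂ := (n : ℂ) ^ (-s)
  have hf : Summable f := by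
    simpa only [one_div, ← Complex.cpow_neg] using Complex.summable_one_div_nat_cpow.2 hs
  have hζ : HasSum f (riemannZeta s) := by
    simpa only [zeta_eq_tsum_one_div_nat_cpow hs, one_div, ← Complex.cpow_neg] using hf.hasSum
  have hs0 : -s ≠ 0 := by
    rw [neg_ne_zero]; rintro rfl; norm_num at hs
  have hf01 : ∑ i ∈ range 2, f i = 1 := by simp [f, sum_range_succ, Complex.zero_cpow hs0]
  have hsub :=
    (hasSum_subtype_nat_le_iff (f := f) 2).1 ((summable_subtype_nat_le_iff 2).2 hf).hasSum
  rw [hζ.unique hsub, hf01, add_comm]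

theorem hasSum_natCast_list_prod_cpow {p : ℕ → Prop} {s : ℂ}
    (hf : Summable fun n : {n // p n} => ‖((n : ℕ) : ℂ) ^ s‖)
    (h : ∑' n : {n // p n}, ‖((n : ℕ) : ℂ) ^ s‖ < 1) :
    HasSum (fun c : {l : List ℕ // ∀ i ∈ l, p i} => ((c.val.prod : ℕ) : ℂ) ^ s)
      (1 - ∑' n : {n // p n}, ((n : ℕ) : ℂ) ^ s)⁻¹ := by
  rw [← (Equiv.listSubtypeComm p).hasSum_iff]
  have hprod (l : List {n // p n}) : (((Equiv.listSubtypeComm p l).val.prod : ℕ) : ℂ) ^ s =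
      (l.map fun n : {n // p n} => ((n : ℕ) : ℂ) ^ s).prod := by
    rw [← Complex.list_prod_map_natCast_cpow, Equiv.listSubtypeComm, Equiv.coe_fn_mk,
      List.map_unattach]
    rfl
  simpa only [Function.comp_def, hprod] using hasSum_list_prod_map hf h

/-- **Composition zeta function and the Riemann zeta function.** For `s ∈ ℂ` with
`∑_{n≥2} n^{-Re s} < 1`, the family `N(c)^{-s}` over compositions with all parts `≥ 2`
is summable, `2 - ζ(s) ≠ 0`, and `∑_{c∈C_{ℕ*}} N(c)^{-s} = 1/(2 - ζ(s))`. -/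
theorem composition_zeta_no_ones (s : ℂ)
    (hsum : Summable (fun n : {n : ℕ // 2 ≤ n} => ((n : ℕ) : ℝ) ^ (-s.re)))
    (hlt : ∑' n : {n : ℕ // 2 ≤ n}, ((n : ℕ) : ℝ) ^ (-s.re) < 1) :
    Summable (fun c : {l : List ℕ // ∀ i ∈ l, 2 ≤ i} =>
        ((c.val.prod : ℕ) : ℂ) ^ (-s)) ∧
    2 - riemannZeta s ≠ 0 ∧
    ∑' c : {l : List ℕ // ∀ i ∈ l, 2 ≤ i}, ((c.val.prod : ℕ) : ℂ) ^ (-s)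
      = (2 - riemannZeta s)⁻¹ := by
  have hre : 1 < s.re := by
    simpa using Real.summable_nat_rpow.1 ((summable_subtype_nat_le_iff 2).1 hsum)
  have hnorm (n : {n : ℕ // 2 ≤ n}) : ‖((n : ℕ) : ℂ) ^ (-s)‖ = ((n : ℕ) : ℝ) ^ (-s.re) := by
    simp [Complex.norm_natCast_cpow_of_pos (by omega : 0 < n.1)]
  have hf : Summable fun n : {n : ℕ // 2 ≤ n} => ‖((n : ℕ) : ℂ) ^ (-s)‖ := by
    simpa only [hnorm] using hsum
  have hf1 : ∑' n : {n : ℕ // 2 ≤ n}, ‖((n : ℕ) : ℂ) ^ (-s)‖ < 1 := by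
    simpa only [hnorm] using hlt
  have h2 : 2 - riemannZeta s = 1 - ∑' n : {n : ℕ // 2 ≤ n}, ((n : ℕ) : ℂ) ^ (-s) := by
    rw [riemannZeta_eq_one_add_tsum hre]; ring
  have hcomp := hasSum_natCast_list_prod_cpow hf hf1
  rw [← h2] at hcomp
  refine ⟨hcomp.summable, ?_, hcomp.tsum_eq⟩
  rw [h2]
  exact (isUnit_one_sub_of_norm_lt_one ((norm_tsum_le_tsum_norm hf).trans_lt hf1)).ne_zero
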